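/- arXiv:1910.09822 — 5 statements merged into one kernel-verified Lean document; each statement's English description precedes it below -/
import Mathlib

section
/- Let 𝒢 = {h ∈ C([x_1,x_N]) : h(x_1)=y_1, h(x_N)=y_N} with the sup metric, let L_n be the affine maps with L_n(x_1)=x_n, L_n(x_N)=x_{n+1}, and define (Th)(x) = α_n h(L_n^{-1}(x)) + q_n(L_n^{-1}(x)) for x ∈ [x_n,x_{n+1}], where q_n ∈ C([x_1,x_N]) satisfy the matching conditions α_n y_1 + q_n(x_1) = y_n and α_n y_N + q_n(x_N) = y_{n+1}, with |α_n| ≤ r < 1. Then T maps 𝒢 into itself and is a contraction with ratio at most r = max_n |α_n|; hence T has a unique fixed point g ∈ 𝒢 satisfying g(L_n(x)) = α_n g(x) + q_n(x) for all x ∈ [x_1,x_N] and all n. -/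
/-!
The matching conditions make adjacent branches of `T` agree at their common knot, so `T` maps `𝒢`
into itself, and pointwise `|T h - T h*| ≤ r · sup |h - h*|`. Realised inside
`C([x 0, x (N-1)], ℝ)`, `𝒢` is closed, hence complete, and Banach's theorem yields a fixed point.
A function in `𝒢` satisfies the functional equation exactly when it is fixed by `T`; uniqueness
follows since `sup |g₁ - g₂| ≤ r · sup |g₁ - g₂|`.
-/

open Set
open scoped NNReal

noncomputable section

/-- `L n = rescale (x 0) (x (N-1)) (x n) (x (n+1))`. -/
def rescale (a b c d t : ℝ) : ℝ := (d - c) / (b - a) * (t - a) + c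

section Rescale

variable {a b c d : ℝ}

@[simp]
lemma rescale_left : rescale a b c d a = c := by
  simp [rescale]

lemma rescale_right (hab : a ≠ b) : rescale a b c d b = d := by
  rw [rescale, div_mul_cancel₀ _ (sub_ne_zero.2 hab.symm)]
  ring

lemma rescale_rescale (hab : a ≠ b) (hcd : c ≠ d) (t : ℝ) :
    rescale a b c d (rescale c d a b t) = t := by
  simp only [rescale]
  field_simp [sub_ne_zero.2 hab.symm, sub_ne_zero.2 hcd.symm]
  ring

@[fun_prop]
lemma continuous_rescale : Continuous (rescale a b c d) := by
  unfold rescale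
  fun_prop

lemma mapsTo_rescale (hab : a < b) (hcd : c ≤ d) :
    MapsTo (rescale a b c d) (Icc a b) (Icc c d) := by
  have hmono : Monotone (rescale a b c d) := fun s t hst => by
    unfold rescale
    gcongr
  simpa only [rescale_left, rescale_right hab.ne] using hmono.mapsTo_Icc (a := a) (b := b)

end Rescale

/-- `𝒢 = pinnedOn (x 0) (x (N-1)) (y 0) (y (N-1))`. -/
def pinnedOn (a b c d : ℝ) : Set (ℝ → ℝ) :=
  {f | ContinuousOn f (Icc a b) ∧ f a = c ∧ f b = d}

section Contraction

variable {a b c d : ℝ} {K : ℝ≥0} {T : (ℝ → ℝ) → ℝ → ℝ}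

lemma rescale_mem_pinnedOn (hab : a ≠ b) : rescale a b c d ∈ pinnedOn a b c d :=
  ⟨continuous_rescale.continuousOn, rescale_left, rescale_right hab⟩

lemma mem_pinnedOn_of_eqOn {f g : ℝ → ℝ} (hab : a ≤ b) (hf : f ∈ pinnedOn a b c d)
    (hfg : EqOn f g (Icc a b)) : g ∈ pinnedOn a b c d :=
  ⟨hf.1.congr hfg.symm, (hfg (left_mem_Icc.2 hab)).symm.trans hf.2.1,
    (hfg (right_mem_Icc.2 hab)).symm.trans hf.2.2⟩

lemma IccExtend_domRestrict_mem_pinnedOn {f : ℝ → ℝ} (hab : a ≤ b) (hf : f ∈ pinnedOn a b c d) :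
    IccExtend hab ((Icc a b).domRestrict f) ∈ pinnedOn a b c d :=
  mem_pinnedOn_of_eqOn hab hf fun _ hu => (IccExtend_of_mem hab ((Icc a b).domRestrict f) hu).symm

lemma isClosed_setOf_IccExtend_mem_pinnedOn (hab : a ≤ b) :
    IsClosed {f : C(Icc a b, ℝ) | IccExtend hab f ∈ pinnedOn a b c d} := by
  have hS : {f : C(Icc a b, ℝ) | IccExtend hab f ∈ pinnedOn a b c d} =
      {f | f ⟨a, left_mem_Icc.2 hab⟩ = c} ∩ {f | f ⟨b, right_mem_Icc.2 hab⟩ = d} := by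
    ext f
    simp [pinnedOn, (continuous_IccExtend_iff.2 f.continuous).continuousOn]
  rw [hS]
  exact (isClosed_eq (continuous_eval_const _) continuous_const).inter
    (isClosed_eq (continuous_eval_const _) continuous_const)

theorem exists_fixedPoint_pinnedOn_of_contraction (hab : a < b) (hK : K < 1)
    (hmaps : MapsTo T (pinnedOn a b c d) (pinnedOn a b c d))
    (hcontr : ∀ f ∈ pinnedOn a b c d, ∀ g ∈ pinnedOn a b c d, ∀ u ∈ Icc a b,
      ∃ v ∈ Icc a b, |T f u - T g u| ≤ K * |f v - g v|) :
    ∃ g ∈ pinnedOn a b c d, EqOn (T g) g (Icc a b) := by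
  set S := {f : C(Icc a b, ℝ) | IccExtend hab.le f ∈ pinnedOn a b c d}
  have : CompleteSpace S := (isClosed_setOf_IccExtend_mem_pinnedOn hab.le).completeSpace_coe
  let restrict (f : ℝ → ℝ) (hf : f ∈ pinnedOn a b c d) : S :=
    ⟨⟨(Icc a b).domRestrict f, hf.1.domRestrict⟩, IccExtend_domRestrict_mem_pinnedOn hab.le hf⟩
  have : Nonempty S := ⟨restrict _ (rescale_mem_pinnedOn hab.ne)⟩
  let Θ : S → S := fun f => restrict _ (hmaps f.2)
  have hΘ : ContractingWith K Θ := by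
    refine ⟨hK, LipschitzWith.of_dist_le_mul fun f g => ?_⟩
    refine (ContinuousMap.dist_le (by positivity)).2 fun u => ?_
    obtain ⟨v, hv, hle⟩ := hcontr _ f.2 _ g.2 u u.2
    calc dist (T (IccExtend hab.le f) u) (T (IccExtend hab.le g) u)
        ≤ K * dist (f.1 (projIcc a b hab.le v)) (g.1 (projIcc a b hab.le v)) := hle
      _ ≤ K * dist f g := by gcongr; exact ContinuousMap.dist_apply_le_dist _
  set g := ContractingWith.fixedPoint Θ hΘ
  have hg : Θ g = g := hΘ.fixedPoint_isFixedPt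
  refine ⟨IccExtend hab.le g.1, g.2, fun u hu => ?_⟩
  calc T (IccExtend hab.le g.1) u = (Θ g).1 ⟨u, hu⟩ := rfl
    _ = IccExtend hab.le g.1 u := by rw [hg, IccExtend_of_mem hab.le _ hu]

theorem eqOn_of_fixedPoints_pinnedOn_of_contraction (hK : K < 1)
    (hcontr : ∀ f ∈ pinnedOn a b c d, ∀ g ∈ pinnedOn a b c d, ∀ u ∈ Icc a b,
      ∃ v ∈ Icc a b, |T f u - T g u| ≤ K * |f v - g v|)
    {g₁ g₂ : ℝ → ℝ} (hg₁ : g₁ ∈ pinnedOn a b c d) (hg₂ : g₂ ∈ pinnedOn a b c d)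
    (hfix₁ : EqOn (T g₁) g₁ (Icc a b)) (hfix₂ : EqOn (T g₂) g₂ (Icc a b)) :
    EqOn g₁ g₂ (Icc a b) := by
  intro u hu
  obtain ⟨w, hw, hmax⟩ :=
    isCompact_Icc.exists_isMaxOn ⟨u, hu⟩ (hg₁.1.sub hg₂.1).abs
  obtain ⟨v, hv, hle⟩ := hcontr g₁ hg₁ g₂ hg₂ w hw
  rw [hfix₁ hw, hfix₂ hw] at hle
  have hvw : |g₁ v - g₂ v| ≤ |g₁ w - g₂ w| := hmax hv
  have hw0 : |g₁ w - g₂ w| = 0 := by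
    nlinarith [abs_nonneg (g₁ w - g₂ w), abs_nonneg (g₁ v - g₂ v), K.2]
  have hu0 : |g₁ u - g₂ u| ≤ 0 := hw0 ▸ hmax hu
  exact sub_eq_zero.1 (abs_nonpos_iff.1 hu0)

end Contraction

namespace ReadBajraktarevic

variable {M n m : ℕ} {x y α : ℕ → ℝ} {q : ℕ → ℝ → ℝ} {h : ℝ → ℝ} {u : ℝ}

/-- At an interior knot both adjacent branches give the same value (`branch_eq_branch`), so the
choice made here is immaterial. -/
def knotIndex (x : ℕ → ℝ) (M : ℕ) (u : ℝ) : ℕ :=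
  Nat.findGreatest (fun n => x n ≤ u) M

def branch (x : ℕ → ℝ) (M : ℕ) (α : ℕ → ℝ) (q : ℕ → ℝ → ℝ) (n : ℕ) (h : ℝ → ℝ) (u : ℝ) : ℝ :=
  α n * h (rescale (x n) (x (n + 1)) (x 0) (x (M + 1)) u) +
    q n (rescale (x n) (x (n + 1)) (x 0) (x (M + 1)) u)

def operator (x : ℕ → ℝ) (M : ℕ) (α : ℕ → ℝ) (q : ℕ → ℝ → ℝ) (h : ℝ → ℝ) (u : ℝ) : ℝ :=
  branch x M α q (knotIndex x M u) h u

lemma knotIndex_le : knotIndex x M u ≤ M :=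
  Nat.findGreatest_le M

lemma mem_Icc_knotIndex (hu : u ∈ Icc (x 0) (x (M + 1))) :
    u ∈ Icc (x (knotIndex x M u)) (x (knotIndex x M u + 1)) := by
  refine ⟨Nat.findGreatest_spec (P := fun n => x n ≤ u) (Nat.zero_le M) hu.1, ?_⟩
  rcases knotIndex_le.eq_or_lt with hM | hlt
  · rw [hM]
    exact hu.2
  · exact (not_le.1 (Nat.findGreatest_is_greatest (P := fun n => x n ≤ u)
      (Nat.lt_succ_self _) hlt)).le

lemma knot_lt_succ (hx : StrictMonoOn x (Iic (M + 1))) (hn : n ≤ M) : x n < x (n + 1) :=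
  hx (by simp; omega) (by simp; omega) n.lt_succ_self

lemma knot_zero_lt_last (hx : StrictMonoOn x (Iic (M + 1))) : x 0 < x (M + 1) :=
  hx (by simp) (by simp) M.succ_pos

lemma Icc_knots_subset (hx : MonotoneOn x (Iic (M + 1))) (hn : n ≤ M) :
    Icc (x n) (x (n + 1)) ⊆ Icc (x 0) (x (M + 1)) :=
  Icc_subset_Icc (hx (by simp) (by simp; omega) n.zero_le)
    (hx (by simp; omega) (by simp) (by omega))

lemma eq_succ_of_mem_Icc_knots (hx : StrictMonoOn x (Iic (M + 1))) (hnm : n < m) (hm : m ≤ M)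
    (hun : u ≤ x (n + 1)) (hmu : x m ≤ u) : m = n + 1 ∧ u = x m := by
  obtain rfl : m = n + 1 := by
    by_contra hne
    have hlt : x (n + 1) < x m := hx (by simp; omega) (by simp; omega) (by omega)
    linarith
  exact ⟨rfl, le_antisymm hun hmu⟩

lemma branch_left (hh : h (x 0) = y 0) (hmatch : α n * y 0 + q n (x 0) = y n) :
    branch x M α q n h (x n) = y n := by
  simp [branch, hh, hmatch]

lemma branch_right (hxn : x n ≠ x (n + 1)) (hh : h (x (M + 1)) = y (M + 1))
    (hmatch : α n * y (M + 1) + q n (x (M + 1)) = y (n + 1)) :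
    branch x M α q n h (x (n + 1)) = y (n + 1) := by
  rw [branch, rescale_right hxn, hh, hmatch]

lemma branch_eq_branch (hx : StrictMonoOn x (Iic (M + 1)))
    (hmatch₁ : ∀ n ≤ M, α n * y 0 + q n (x 0) = y n)
    (hmatch₂ : ∀ n ≤ M, α n * y (M + 1) + q n (x (M + 1)) = y (n + 1))
    (hh₀ : h (x 0) = y 0) (hh₁ : h (x (M + 1)) = y (M + 1)) (hn : n ≤ M) (hm : m ≤ M)
    (hun : u ∈ Icc (x n) (x (n + 1))) (hum : u ∈ Icc (x m) (x (m + 1))) :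
    branch x M α q n h u = branch x M α q m h u := by
  wlog hnm : n < m generalizing n m
  · rcases (not_lt.1 hnm).eq_or_lt with rfl | hmn
    · rfl
    · exact (this hm hn hum hun hmn).symm
  obtain ⟨rfl, rfl⟩ := eq_succ_of_mem_Icc_knots hx hnm hm hun.2 hum.1
  rw [branch_right (knot_lt_succ hx hn).ne hh₁ (hmatch₂ n hn), branch_left hh₀ (hmatch₁ _ hm)]

lemma operator_eq_branch (hx : StrictMonoOn x (Iic (M + 1)))
    (hmatch₁ : ∀ n ≤ M, α n * y 0 + q n (x 0) = y n)
    (hmatch₂ : ∀ n ≤ M, α n * y (M + 1) + q n (x (M + 1)) = y (n + 1))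
    (hh₀ : h (x 0) = y 0) (hh₁ : h (x (M + 1)) = y (M + 1)) (hn : n ≤ M)
    (hu : u ∈ Icc (x n) (x (n + 1))) :
    operator x M α q h u = branch x M α q n h u :=
  branch_eq_branch hx hmatch₁ hmatch₂ hh₀ hh₁ knotIndex_le hn
    (mem_Icc_knotIndex (Icc_knots_subset hx.monotoneOn hn hu)) hu

lemma continuousOn_branch (hxn : x n < x (n + 1)) (hab : x 0 < x (M + 1))
    (hh : ContinuousOn h (Icc (x 0) (x (M + 1))))
    (hq : ContinuousOn (q n) (Icc (x 0) (x (M + 1)))) :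
    ContinuousOn (branch x M α q n h) (Icc (x n) (x (n + 1))) := by
  have hmaps := mapsTo_rescale hxn hab.le
  exact (continuousOn_const.mul (hh.comp continuous_rescale.continuousOn hmaps)).add
    (hq.comp continuous_rescale.continuousOn hmaps)

lemma mapsTo_operator (hx : StrictMonoOn x (Iic (M + 1)))
    (hmatch₁ : ∀ n ≤ M, α n * y 0 + q n (x 0) = y n)
    (hmatch₂ : ∀ n ≤ M, α n * y (M + 1) + q n (x (M + 1)) = y (n + 1))
    (hq : ∀ n ≤ M, ContinuousOn (q n) (Icc (x 0) (x (M + 1)))) :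
    MapsTo (operator x M α q) (pinnedOn (x 0) (x (M + 1)) (y 0) (y (M + 1)))
      (pinnedOn (x 0) (x (M + 1)) (y 0) (y (M + 1))) := by
  rintro h ⟨hc, hh₀, hh₁⟩
  have hab := knot_zero_lt_last hx
  have hcover : Icc (x 0) (x (M + 1)) ⊆ ⋃ n : Fin (M + 1), Icc (x n) (x (n + 1)) := fun u hu =>
    mem_iUnion.2 ⟨⟨knotIndex x M u, Nat.lt_succ_of_le knotIndex_le⟩, mem_Icc_knotIndex hu⟩
  refine ⟨?_, ?_, ?_⟩
  · refine ((locallyFinite_of_finite _).continuousOn_iUnion (fun _ => isClosed_Icc)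
      fun n => ?_).mono hcover
    have hn : (n : ℕ) ≤ M := Nat.le_of_lt_succ n.2
    exact (continuousOn_branch (knot_lt_succ hx hn) hab hc (hq n hn)).congr fun u hu =>
      operator_eq_branch hx hmatch₁ hmatch₂ hh₀ hh₁ hn hu
  · exact (operator_eq_branch hx hmatch₁ hmatch₂ hh₀ hh₁ M.zero_le
      ⟨le_rfl, (knot_lt_succ hx M.zero_le).le⟩).trans (branch_left hh₀ (hmatch₁ 0 M.zero_le))
  · exact (operator_eq_branch hx hmatch₁ hmatch₂ hh₀ hh₁ le_rfl
      ⟨(knot_lt_succ hx le_rfl).le, le_rfl⟩).trans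
      (branch_right (knot_lt_succ hx le_rfl).ne hh₁ (hmatch₂ M le_rfl))

lemma abs_operator_sub_le {K : ℝ} (hx : StrictMonoOn x (Iic (M + 1))) (hα : ∀ n ≤ M, |α n| ≤ K)
    (f g : ℝ → ℝ) (hu : u ∈ Icc (x 0) (x (M + 1))) :
    ∃ v ∈ Icc (x 0) (x (M + 1)),
      |operator x M α q f u - operator x M α q g u| ≤ K * |f v - g v| := by
  set n := knotIndex x M u
  have hab := knot_zero_lt_last hx
  refine ⟨_, mapsTo_rescale (knot_lt_succ hx knotIndex_le) hab.le (mem_Icc_knotIndex hu), ?_⟩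
  rw [operator, operator, branch, branch, add_sub_add_right_eq_sub, ← mul_sub, abs_mul]
  exact mul_le_mul_of_nonneg_right (hα n knotIndex_le) (abs_nonneg _)

lemma apply_rescale_of_eqOn_operator (hx : StrictMonoOn x (Iic (M + 1)))
    (hmatch₁ : ∀ n ≤ M, α n * y 0 + q n (x 0) = y n)
    (hmatch₂ : ∀ n ≤ M, α n * y (M + 1) + q n (x (M + 1)) = y (n + 1))
    {g : ℝ → ℝ} (hg : g ∈ pinnedOn (x 0) (x (M + 1)) (y 0) (y (M + 1)))
    (hfix : EqOn (operator x M α q g) g (Icc (x 0) (x (M + 1)))) (hn : n ≤ M) {t : ℝ}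
    (ht : t ∈ Icc (x 0) (x (M + 1))) :
    g (rescale (x 0) (x (M + 1)) (x n) (x (n + 1)) t) = α n * g t + q n t := by
  have hab := knot_zero_lt_last hx
  have hxn := knot_lt_succ hx hn
  have hu := mapsTo_rescale hab hxn.le ht
  rw [← hfix (Icc_knots_subset hx.monotoneOn hn hu),
    operator_eq_branch hx hmatch₁ hmatch₂ hg.2.1 hg.2.2 hn hu, branch,
    rescale_rescale hxn.ne hab.ne]

lemma eqOn_operator_of_apply_rescale (hx : StrictMonoOn x (Iic (M + 1))) {g : ℝ → ℝ}
    (hfe : ∀ n ≤ M, ∀ t ∈ Icc (x 0) (x (M + 1)),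
      g (rescale (x 0) (x (M + 1)) (x n) (x (n + 1)) t) = α n * g t + q n t) :
    EqOn (operator x M α q g) g (Icc (x 0) (x (M + 1))) := by
  intro u hu
  set n := knotIndex x M u
  have hab := knot_zero_lt_last hx
  have hxn : x n < x (n + 1) := knot_lt_succ hx knotIndex_le
  rw [operator, branch, ← hfe n knotIndex_le _ (mapsTo_rescale hxn hab.le (mem_Icc_knotIndex hu)),
    rescale_rescale hab.ne hxn.ne]

end ReadBajraktarevic

open ReadBajraktarevic in
/-- Read–Bajraktarević operator fixed point: existence and uniqueness of the
fractal interpolation function satisfying `g (L n t) = α n * g t + q n t`. -/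
theorem read_bajraktarevic_fixed_point (N : ℕ) (hN : 2 ≤ N) (x y : ℕ → ℝ)
    (hx : ∀ i j, i < j → j ≤ N - 1 → x i < x j)
    (L : ℕ → ℝ → ℝ)
    (hL : ∀ n t, L n t = (x (n+1) - x n) / (x (N-1) - x 0) * (t - x 0) + x n)
    (α : ℕ → ℝ) (r : ℝ) (hr : r < 1) (hα : ∀ n, n ≤ N - 2 → |α n| ≤ r)
    (q : ℕ → ℝ → ℝ)
    (hq : ∀ n, n ≤ N - 2 → ContinuousOn (q n) (Set.Icc (x 0) (x (N-1))))
    (hmatch1 : ∀ n, n ≤ N - 2 → α n * y 0 + q n (x 0) = y n)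
    (hmatch2 : ∀ n, n ≤ N - 2 → α n * y (N-1) + q n (x (N-1)) = y (n+1)) :
    (∃ g : ℝ → ℝ, ContinuousOn g (Set.Icc (x 0) (x (N-1))) ∧
      g (x 0) = y 0 ∧ g (x (N-1)) = y (N-1) ∧
      ∀ n, n ≤ N - 2 → ∀ t ∈ Set.Icc (x 0) (x (N-1)),
        g (L n t) = α n * g t + q n t) ∧
    (∀ g₁ g₂ : ℝ → ℝ,
      (ContinuousOn g₁ (Set.Icc (x 0) (x (N-1))) ∧ g₁ (x 0) = y 0 ∧ g₁ (x (N-1)) = y (N-1) ∧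
        ∀ n, n ≤ N - 2 → ∀ t ∈ Set.Icc (x 0) (x (N-1)), g₁ (L n t) = α n * g₁ t + q n t) →
      (ContinuousOn g₂ (Set.Icc (x 0) (x (N-1))) ∧ g₂ (x 0) = y 0 ∧ g₂ (x (N-1)) = y (N-1) ∧
        ∀ n, n ≤ N - 2 → ∀ t ∈ Set.Icc (x 0) (x (N-1)), g₂ (L n t) = α n * g₂ t + q n t) →
      Set.EqOn g₁ g₂ (Set.Icc (x 0) (x (N-1)))) := by
  obtain ⟨M, rfl⟩ : ∃ M, N = M + 2 := ⟨N - 2, by omega⟩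
  simp only [Nat.add_sub_cancel, Nat.add_succ_sub_one] at *
  obtain rfl : L = fun n => rescale (x 0) (x (M + 1)) (x n) (x (n + 1)) := funext₂ hL
  have hx' : StrictMonoOn x (Iic (M + 1)) := fun i _ j hj hij => hx i j hij hj
  have hab := knot_zero_lt_last hx'
  have hK : r.toNNReal < 1 := Real.toNNReal_lt_one.2 hr
  have hcontr : ∀ f ∈ pinnedOn (x 0) (x (M + 1)) (y 0) (y (M + 1)),
      ∀ g ∈ pinnedOn (x 0) (x (M + 1)) (y 0) (y (M + 1)), ∀ u ∈ Icc (x 0) (x (M + 1)),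
      ∃ v ∈ Icc (x 0) (x (M + 1)),
        |operator x M α q f u - operator x M α q g u| ≤ r.toNNReal * |f v - g v| :=
    fun f _ g _ _ hu =>
      abs_operator_sub_le hx' (fun n hn => (hα n hn).trans r.le_coe_toNNReal) f g hu
  have hmaps := mapsTo_operator hx' hmatch1 hmatch2 hq
  refine ⟨?_, ?_⟩
  · obtain ⟨g, hg, hfix⟩ := exists_fixedPoint_pinnedOn_of_contraction hab hK hmaps hcontr
    exact ⟨g, hg.1, hg.2.1, hg.2.2, fun n hn t ht =>
      apply_rescale_of_eqOn_operator hx' hmatch1 hmatch2 hg hfix hn ht⟩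
  · rintro g₁ g₂ ⟨hc₁, ha₁, hb₁, hfe₁⟩ ⟨hc₂, ha₂, hb₂, hfe₂⟩
    exact eqOn_of_fixedPoints_pinnedOn_of_contraction hK hcontr ⟨hc₁, ha₁, hb₁⟩ ⟨hc₂, ha₂, hb₂⟩
      (eqOn_operator_of_apply_rescale hx' hfe₁) (eqOn_operator_of_apply_rescale hx' hfe₂)
end
end

section
/- With the setting of the Read–Bajraktarević operator, the fixed point g of T satisfies g(x_i) = y_i for all i ∈ {1,…,N}, where data points (x_i, y_i), i = 1,…,N with x_1 < … < x_N are given and the maps satisfy α_n y_1 + q_n(x_1) = y_n, α_n y_N + q_n(x_N) = y_{n+1}. -/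
theorem fif_interpolates_general (N : ℕ) (x y : ℕ → ℝ)
    (hx : ∀ i j, i < j → j ≤ N - 1 → x i < x j)
    (L : ℕ → ℝ → ℝ)
    (hL : ∀ n t, L n t = (x (n+1) - x n) / (x (N-1) - x 0) * (t - x 0) + x n)
    (α : ℕ → ℝ)
    (q : ℕ → ℝ → ℝ)
    (hmatch1 : ∀ n, n ≤ N - 2 → α n * y 0 + q n (x 0) = y n)
    (g : ℝ → ℝ)
    (hg0 : g (x 0) = y 0) (hgN : g (x (N-1)) = y (N-1))
    (hgfix : ∀ n, n ≤ N - 2 → ∀ t ∈ Set.Icc (x 0) (x (N-1)),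
      g (L n t) = α n * g t + q n t) :
    ∀ i, i ≤ N - 1 → g (x i) = y i := by
  intro i hi
  rcases hi.lt_or_eq with hlt | rfl
  · have hn : i ≤ N - 2 := by omega
    have hx0 : x 0 ∈ Set.Icc (x 0) (x (N-1)) := ⟨le_rfl, (hx 0 (N-1) (by omega) le_rfl).le⟩
    have hLx0 : L i (x 0) = x i := by rw [hL]; ring
    calc g (x i) = g (L i (x 0)) := by rw [hLx0]
      _ = α i * y 0 + q i (x 0) := by rw [hgfix i hn _ hx0, hg0]
      _ = y i := hmatch1 i hn
  · exact hgN

/-- The fractal interpolation function interpolates the data: `g (x i) = y i`. -/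
theorem fif_interpolates (N : ℕ) (hN : 2 ≤ N) (x y : ℕ → ℝ)
    (hx : ∀ i j, i < j → j ≤ N - 1 → x i < x j)
    (L : ℕ → ℝ → ℝ)
    (hL : ∀ n t, L n t = (x (n+1) - x n) / (x (N-1) - x 0) * (t - x 0) + x n)
    (α : ℕ → ℝ) (r : ℝ) (hr : r < 1) (hα : ∀ n, n ≤ N - 2 → |α n| ≤ r)
    (q : ℕ → ℝ → ℝ)
    (hmatch1 : ∀ n, n ≤ N - 2 → α n * y 0 + q n (x 0) = y n)
    (hmatch2 : ∀ n, n ≤ N - 2 → α n * y (N-1) + q n (x (N-1)) = y (n+1))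
    (g : ℝ → ℝ) (hgc : ContinuousOn g (Set.Icc (x 0) (x (N-1))))
    (hg0 : g (x 0) = y 0) (hgN : g (x (N-1)) = y (N-1))
    (hgfix : ∀ n, n ≤ N - 2 → ∀ t ∈ Set.Icc (x 0) (x (N-1)),
      g (L n t) = α n * g t + q n t) :
    ∀ i, i ≤ N - 1 → g (x i) = y i :=
  fif_interpolates_general N x y hx L hL α q hmatch1 g hg0 hgN hgfix
end

section
/- With the same setup, if A_n ≤ dλ_n(1-α_n), B_n ≤ d(1-α_n)(3λ_n+1), C_n ≤ d(1-α_n)(3λ_n+3), D_n ≤ d(1-α_n)(λ_n+3), E_n ≤ d(1-α_n) with 0 ≤ α_n < 1 and λ_n > 0, then α_n d + R_n(θ) ≤ d for all θ ∈ [0,1]. -/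
/-!
Multiplying the denominator `λ(1-θ) + θ` by `((1-θ) + θ)^3 = 1` writes it in the quartic
Bernstein-type basis with coefficients `λ, 3λ+1, 3λ+3, λ+3, 1`. The hypotheses say the numerator's
coefficients are at most `d(1-α)` times these, and the basis is nonnegative on `[0,1]`, so
`R(θ) ≤ d(1-α)`.
-/

/-- The binomial factors of the Bernstein basis are absorbed into the coefficients. -/
def quarticBernsteinSum (A B C D E θ : ℝ) : ℝ :=
  A * (1 - θ)^4 + B * (1 - θ)^3 * θ + C * (1 - θ)^2 * θ^2 + D * (1 - θ) * θ^3 + E * θ^4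

theorem quarticBernsteinSum_le_of_le {A B C D E A' B' C' D' E' θ : ℝ}
    (hθ : θ ∈ Set.Icc (0:ℝ) 1) (hA : A ≤ A') (hB : B ≤ B') (hC : C ≤ C') (hD : D ≤ D')
    (hE : E ≤ E') :
    quarticBernsteinSum A B C D E θ ≤ quarticBernsteinSum A' B' C' D' E' θ := by
  obtain ⟨hθ0, hθ1⟩ := hθ
  have h1θ : 0 ≤ 1 - θ := sub_nonneg.mpr hθ1
  unfold quarticBernsteinSum
  gcongr

theorem quarticBernsteinSum_degree_elevation (k lam θ : ℝ) :
    quarticBernsteinSum (k * lam) (k * (3 * lam + 1)) (k * (3 * lam + 3)) (k * (lam + 3)) k θ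
      = k * (lam * (1 - θ) + θ) := by
  have hone : (1 - θ) + θ = 1 := sub_add_cancel 1 θ
  calc _ = k * (lam * (1 - θ) + θ) * ((1 - θ) + θ)^3 := by unfold quarticBernsteinSum; ring
    _ = _ := by rw [hone, one_pow, mul_one]

theorem linear_interpolation_pos {lam θ : ℝ} (hlam : 0 < lam) (hθ : θ ∈ Set.Icc (0:ℝ) 1) :
    0 < lam * (1 - θ) + θ := by
  obtain ⟨hθ0, hθ1⟩ := hθ
  rcases hθ0.eq_or_lt with rfl | hθpos
  · simpa using hlam
  · nlinarith [mul_nonneg hlam.le (sub_nonneg.mpr hθ1)]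

theorem rational_quartic_upper_bound_general (d lam αn A B C D E : ℝ)
    (hlam : 0 < lam)
    (hA : A ≤ d * lam * (1 - αn))
    (hB : B ≤ d * (1 - αn) * (3*lam + 1))
    (hC : C ≤ d * (1 - αn) * (3*lam + 3))
    (hD : D ≤ d * (1 - αn) * (lam + 3))
    (hE : E ≤ d * (1 - αn)) :
    ∀ θ ∈ Set.Icc (0:ℝ) 1,
      αn * d +
        (A * (1 - θ)^4 + B * (1 - θ)^3 * θ + C * (1 - θ)^2 * θ^2
          + D * (1 - θ) * θ^3 + E * θ^4) / (lam * (1 - θ) + θ) ≤ d := by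
  intro θ hθ
  set k := d * (1 - αn)
  have hnum : quarticBernsteinSum A B C D E θ ≤ k * (lam * (1 - θ) + θ) := by
    rw [← quarticBernsteinSum_degree_elevation]
    exact quarticBernsteinSum_le_of_le hθ (hA.trans_eq (by ring)) hB hC hD hE
  have hR : quarticBernsteinSum A B C D E θ / (lam * (1 - θ) + θ) ≤ k :=
    (div_le_iff₀ (linear_interpolation_pos hlam hθ)).mpr hnum
  unfold quarticBernsteinSum at hR
  linarith

/-- Upper containment condition for the rational quartic piece. -/
theorem rational_quartic_upper_bound (c d lam αn A B C D E : ℝ)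
    (hlam : 0 < lam) (hα0 : 0 ≤ αn) (hα1 : αn < 1)
    (hA : A ≤ d * lam * (1 - αn))
    (hB : B ≤ d * (1 - αn) * (3*lam + 1))
    (hC : C ≤ d * (1 - αn) * (3*lam + 3))
    (hD : D ≤ d * (1 - αn) * (lam + 3))
    (hE : E ≤ d * (1 - αn)) :
    ∀ θ ∈ Set.Icc (0:ℝ) 1,
      αn * d +
        (A * (1 - θ)^4 + B * (1 - θ)^3 * θ + C * (1 - θ)^2 * θ^2
          + D * (1 - θ) * θ^3 + E * θ^4) / (lam * (1 - θ) + θ) ≤ d :=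
  rational_quartic_upper_bound_general d lam αn A B C D E hlam hA hB hC hD hE
end

section
/- Let g be the unique continuous fixed point of g(L_n(x)) = α_n g(x) + q_n(x), n = 1,…,N−1, where 0 ≤ α_n < 1 and each q_n satisfies q_n(x) ≥ c(1 − α_n) for all x ∈ [x_1,x_N]. If additionally g(x_1) ≥ c and g(x_N) ≥ c, then g(x) ≥ c for all x ∈ [x_1,x_N]. -/
/-!
Let `t₀` be a minimum point of `g` on `[x 0, x (N-1)]`. It lies in some `[x n, x (n+1)]`, the
image of `L n`, so `t₀ = L n s` and `g t₀ = α n * g s + q n s ≥ α n * g t₀ + (1 - α n) * c`;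
since `α n < 1` this gives `g t₀ ≥ c`.
-/

open Set

theorem IsCompact.forall_le_of_forall_le_convex_comb {X : Type*} [TopologicalSpace X] {K : Set X}
    (hK : IsCompact K) {g : X → ℝ} (hg : ContinuousOn g K) {c : ℝ}
    (hself : ∀ t ∈ K, ∃ s ∈ K, ∃ a, 0 ≤ a ∧ a < 1 ∧ a * g s + (1 - a) * c ≤ g t) :
    ∀ t ∈ K, c ≤ g t := by
  intro t ht
  obtain ⟨t₀, ht₀, hmin⟩ := hK.exists_isMinOn ⟨t, ht⟩ hg
  obtain ⟨s, hs, a, ha0, ha1, hle⟩ := hself t₀ ht₀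
  have hcomb : a * g t₀ + (1 - a) * c ≤ g t₀ :=
    le_trans (by gcongr; exact hmin hs) hle
  have hct₀ : c ≤ g t₀ := by nlinarith
  exact hct₀.trans (hmin ht)

theorem exists_mem_Icc_succ_of_mem_Icc {α : Type*} [LinearOrder α] (x : ℕ → α) {t : α} :
    ∀ {m : ℕ}, t ∈ Icc (x 0) (x (m + 1)) → ∃ n ≤ m, t ∈ Icc (x n) (x (n + 1))
  | 0, ht => ⟨0, le_rfl, ht⟩
  | m + 1, ht => by
    by_cases htm : t ≤ x (m + 1)
    · obtain ⟨n, hn, htn⟩ := exists_mem_Icc_succ_of_mem_Icc x ⟨ht.1, htm⟩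
      exact ⟨n, hn.trans m.le_succ, htn⟩
    · exact ⟨m + 1, le_rfl, (not_le.mp htm).le, ht.2⟩

theorem image_Icc_affine {a b u v : ℝ} (hab : a < b) (huv : u < v) :
    (fun s => (v - u) / (b - a) * (s - a) + u) '' Icc a b = Icc u v := by
  have hslope : 0 < (v - u) / (b - a) := div_pos (sub_pos.2 huv) (sub_pos.2 hab)
  have hfun : (fun s => (v - u) / (b - a) * (s - a) + u)
      = ((v - u) / (b - a) * · + (u - (v - u) / (b - a) * a)) := by
    funext s; ring
  rw [hfun, image_affine_Icc' hslope]
  congr 1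
  · ring
  · field_simp [(sub_pos.2 hab).ne']
    ring

theorem fif_above_constant_general (N : ℕ) (hN : 2 ≤ N) (x : ℕ → ℝ)
    (hx : ∀ i j, i < j → j ≤ N - 1 → x i < x j)
    (L : ℕ → ℝ → ℝ)
    (hL : ∀ n t, L n t = (x (n+1) - x n) / (x (N-1) - x 0) * (t - x 0) + x n)
    (α : ℕ → ℝ) (hα0 : ∀ n, n ≤ N - 2 → 0 ≤ α n) (hα1 : ∀ n, n ≤ N - 2 → α n < 1)
    (q : ℕ → ℝ → ℝ) (c : ℝ)
    (hq : ∀ n, n ≤ N - 2 → ∀ t ∈ Set.Icc (x 0) (x (N-1)), c * (1 - α n) ≤ q n t)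
    (g : ℝ → ℝ) (hgc : ContinuousOn g (Set.Icc (x 0) (x (N-1))))
    (hgfix : ∀ n, n ≤ N - 2 → ∀ t ∈ Set.Icc (x 0) (x (N-1)),
      g (L n t) = α n * g t + q n t) :
    ∀ t ∈ Set.Icc (x 0) (x (N-1)), c ≤ g t := by
  refine isCompact_Icc.forall_le_of_forall_le_convex_comb hgc fun t ht => ?_
  have hlast : N - 2 + 1 = N - 1 := by omega
  obtain ⟨n, hn, htn⟩ := exists_mem_Icc_succ_of_mem_Icc x (m := N - 2) (hlast ▸ ht)
  have hLn : L n '' Icc (x 0) (x (N - 1)) = Icc (x n) (x (n + 1)) := by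
    rw [funext (hL n)]
    exact image_Icc_affine (hx 0 (N - 1) (by omega) le_rfl) (hx n (n + 1) (by omega) (by omega))
  obtain ⟨s, hs, rfl⟩ := hLn ▸ htn
  refine ⟨s, hs, α n, hα0 n hn, hα1 n hn, ?_⟩
  rw [hgfix n hn s hs]
  linarith [hq n hn s hs]

/-- Invariance principle: the fractal interpolation function stays above `c`. -/
theorem fif_above_constant (N : ℕ) (hN : 2 ≤ N) (x : ℕ → ℝ)
    (hx : ∀ i j, i < j → j ≤ N - 1 → x i < x j)
    (L : ℕ → ℝ → ℝ)
    (hL : ∀ n t, L n t = (x (n+1) - x n) / (x (N-1) - x 0) * (t - x 0) + x n)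
    (α : ℕ → ℝ) (hα0 : ∀ n, n ≤ N - 2 → 0 ≤ α n) (hα1 : ∀ n, n ≤ N - 2 → α n < 1)
    (q : ℕ → ℝ → ℝ) (c : ℝ)
    (hq : ∀ n, n ≤ N - 2 → ∀ t ∈ Set.Icc (x 0) (x (N-1)), c * (1 - α n) ≤ q n t)
    (g : ℝ → ℝ) (hgc : ContinuousOn g (Set.Icc (x 0) (x (N-1))))
    (hgfix : ∀ n, n ≤ N - 2 → ∀ t ∈ Set.Icc (x 0) (x (N-1)),
      g (L n t) = α n * g t + q n t)
    (hg0 : c ≤ g (x 0)) (hgN : c ≤ g (x (N-1))) :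
    ∀ t ∈ Set.Icc (x 0) (x (N-1)), c ≤ g t :=
  fif_above_constant_general N hN x hx L hL α hα0 hα1 q c hq g hgc hgfix
end

section
/- Let g be the unique continuous fixed point of g(L_n(x)) = α_n g(x) + q_n(x) on [x_1,x_N] with L_n affine and increasing mapping [x_1,x_N] onto [x_n,x_{n+1}], 0 ≤ α_n < 1, and let t(x) = mx + k be a line. If α_n t(x) + q_n(x) ≥ t(L_n(x)) for all n and all x ∈ [x_1,x_N], and g(x_1) ≥ t(x_1), g(x_N) ≥ t(x_N), then g(x) ≥ t(x) for all x ∈ [x_1,x_N]. -/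
/-- Invariance principle: the fractal interpolation function stays above the
line `t(x) = m x + k`. -/
theorem fif_above_line (N : ℕ) (hN : 2 ≤ N) (x : ℕ → ℝ)
    (hx : ∀ i j, i < j → j ≤ N - 1 → x i < x j)
    (L : ℕ → ℝ → ℝ)
    (hL : ∀ n t, L n t = (x (n+1) - x n) / (x (N-1) - x 0) * (t - x 0) + x n)
    (α : ℕ → ℝ) (hα0 : ∀ n, n ≤ N - 2 → 0 ≤ α n) (hα1 : ∀ n, n ≤ N - 2 → α n < 1)
    (q : ℕ → ℝ → ℝ) (m k : ℝ) (line : ℝ → ℝ) (hline : ∀ t, line t = m * t + k)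
    (hq : ∀ n, n ≤ N - 2 → ∀ t ∈ Set.Icc (x 0) (x (N-1)),
      line (L n t) ≤ α n * line t + q n t)
    (g : ℝ → ℝ) (hgc : ContinuousOn g (Set.Icc (x 0) (x (N-1))))
    (hgfix : ∀ n, n ≤ N - 2 → ∀ t ∈ Set.Icc (x 0) (x (N-1)),
      g (L n t) = α n * g t + q n t)
    (hg0 : line (x 0) ≤ g (x 0)) (hgN : line (x (N-1)) ≤ g (x (N-1))) :
    ∀ t ∈ Set.Icc (x 0) (x (N-1)), line t ≤ g t := by
  classical
  have hx0N : x 0 < x (N-1) := hx 0 (N-1) (by omega) le_rfl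
  have hlc : ContinuousOn line (Set.Icc (x 0) (x (N-1))) := by
    have : line = fun t => m * t + k := funext hline
    rw [this]; fun_prop
  have hF : ContinuousOn (fun y => g y - line y) (Set.Icc (x 0) (x (N-1))) :=
    hgc.sub hlc
  obtain ⟨c, hc, hmin⟩ := isCompact_Icc.exists_isMinOn
    (Set.nonempty_Icc.2 hx0N.le) hF
  rw [Set.mem_Icc] at hc
  -- find the subinterval containing c
  set n := Nat.findGreatest (fun i => x i ≤ c) (N-2) with hn
  have hnle : n ≤ N - 2 := Nat.findGreatest_le _
  have hxn : x n ≤ c := Nat.findGreatest_spec (P := fun i => x i ≤ c) (Nat.zero_le _) hc.1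
  have hxn1 : c ≤ x (n+1) := by
    rcases eq_or_lt_of_le hnle with h | h
    · have : n + 1 = N - 1 := by omega
      rw [this]; exact hc.2
    · have := Nat.findGreatest_is_greatest (P := fun i => x i ≤ c)
        (k := n+1) (n := N-2) (by omega) (by omega)
      simpa using le_of_not_ge this
  have hd : 0 < x (n+1) - x n := by
    have := hx n (n+1) (by omega) (by omega)
    linarith
  have hD : 0 < x (N-1) - x 0 := by linarith
  -- preimage of c under L n
  set t1 := (c - x n) * (x (N-1) - x 0) / (x (n+1) - x n) + x 0 with ht1
  have ht1mem : t1 ∈ Set.Icc (x 0) (x (N-1)) := by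
    rw [Set.mem_Icc, ht1]
    constructor
    · have : 0 ≤ (c - x n) * (x (N-1) - x 0) / (x (n+1) - x n) :=
        div_nonneg (mul_nonneg (by linarith) (by linarith)) hd.le
      linarith
    · rw [div_add' _ _ _ hd.ne', div_le_iff₀ hd]
      nlinarith
  have hLt1 : L n t1 = c := by
    rw [hL, ht1]
    field_simp
    ring
  -- key inequality at the minimum
  have hq1 := hq n hnle t1 ht1mem
  rw [hLt1] at hq1
  have hfix1 := hgfix n hnle t1 ht1mem
  rw [hLt1] at hfix1
  have hmin1 : g c - line c ≤ g t1 - line t1 := hmin ht1mem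
  have hμ : 0 ≤ g c - line c := by
    have hα0' := hα0 n hnle
    have hα1' := hα1 n hnle
    nlinarith [mul_le_mul_of_nonneg_left hmin1 hα0']
  intro t ht
  have h2 : g c - line c ≤ g t - line t := hmin ht
  linarith
end
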